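/- arXiv:hep-th/9601138 — 4 statements merged into one kernel-verified Lean document; each statement's English description precedes it below -/
import Mathlib

section
/- Let R be a (possibly noncommutative) unital ring that is an algebra over a field K, let ι be a finite index type, let p : ι → R be a family of pairwise orthogonal idempotents summing to one (p i * p j = 0 for i ≠ j, p i * p i = p i, and ∑ i, p i = 1), and let λ : ι → K be injective. Set H₀ := ∑ i, (λ i) • (p i). Then for every W ∈ R, the element A := ∑ over pairs (i,j) with i ≠ j of ((λ i - λ j)⁻¹) • (p i * W * p j) satisfies H₀ * A - A * H₀ = W - ∑ i, p i * W * p i. -/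
/-- Algebraic core of the quantum diagonalization step: for a complete family of
pairwise orthogonal idempotents `p` and distinct scalars `lam`, the commutator of
`H₀ = ∑ i, lam i • p i` with `A = ∑_{i ≠ j} (lam i - lam j)⁻¹ • (p i * W * p j)`
reproduces the off-diagonal part of `W`. -/
theorem quantum_diagonalization_commutator_identity
    {K R ι : Type*} [Field K] [Ring R] [Algebra K R] [Fintype ι] [DecidableEq ι]
    (p : ι → R)
    (horth : ∀ i j, i ≠ j → p i * p j = 0)
    (hidem : ∀ i, p i * p i = p i)
    (hsum : ∑ i, p i = 1)
    (lam : ι → K) (hinj : Function.Injective lam)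
    (W : R) :
    (∑ i, lam i • p i) *
        (∑ i, ∑ j, if i ≠ j then (lam i - lam j)⁻¹ • (p i * W * p j) else 0) -
      (∑ i, ∑ j, if i ≠ j then (lam i - lam j)⁻¹ • (p i * W * p j) else 0) *
        (∑ i, lam i • p i) =
      W - ∑ i, p i * W * p i := by
  have hL : ∀ i (y : R), (∑ k, lam k • p k) * (p i * y) = lam i • (p i * y) := by
    intro i y
    rw [Finset.sum_mul]
    rw [Finset.sum_eq_single i]
    · rw [smul_mul_assoc, ← mul_assoc, hidem]
    · intro k _ hk
      rw [smul_mul_assoc, ← mul_assoc, horth k i hk, zero_mul, smul_zero]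
    · intro h; exact absurd (Finset.mem_univ i) h
  have hR : ∀ j (y : R), (y * p j) * (∑ k, lam k • p k) = lam j • (y * p j) := by
    intro j y
    rw [Finset.mul_sum]
    rw [Finset.sum_eq_single j]
    · rw [mul_smul_comm, mul_assoc, hidem]
    · intro k _ hk
      rw [mul_smul_comm, mul_assoc, horth j k (Ne.symm hk), mul_zero, smul_zero]
    · intro h; exact absurd (Finset.mem_univ j) h
  have hW : W = ∑ i, ∑ j, p i * W * p j := by
    calc W = (∑ i, p i) * W * (∑ j, p j) := by rw [hsum, one_mul, mul_one]
    _ = ∑ i, ∑ j, p i * W * p j := by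
        rw [Finset.sum_mul, Finset.sum_mul]
        exact Finset.sum_congr rfl fun i _ => by rw [Finset.mul_sum]
  rw [Finset.mul_sum, Finset.sum_mul, ← Finset.sum_sub_distrib]
  have : ∀ i, (∑ k, lam k • p k) * (∑ j, if i ≠ j then (lam i - lam j)⁻¹ • (p i * W * p j) else 0)
      - (∑ j, if i ≠ j then (lam i - lam j)⁻¹ • (p i * W * p j) else 0) * (∑ k, lam k • p k)
      = ∑ j, if i ≠ j then p i * W * p j else 0 := by
    intro i
    rw [Finset.mul_sum, Finset.sum_mul, ← Finset.sum_sub_distrib]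
    refine Finset.sum_congr rfl fun j _ => ?_
    by_cases hij : i ≠ j
    · rw [if_pos hij, if_pos hij]
      rw [mul_smul_comm, smul_mul_assoc]
      have h1 : (∑ k, lam k • p k) * (p i * W * p j) = lam i • (p i * W * p j) := by
        rw [mul_assoc (p i) W (p j)] at *
        exact hL i _
      have h2 : (p i * W * p j) * (∑ k, lam k • p k) = lam j • (p i * W * p j) := hR j _
      have hne : lam i - lam j ≠ 0 := sub_ne_zero.mpr (fun h => hij (hinj h))
      rw [h1, h2, smul_smul, smul_smul, ← sub_smul, ← mul_sub, inv_mul_cancel₀ hne, one_smul]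
    · simp [hij]
  rw [Finset.sum_congr rfl fun i _ => this i]
  have : ∀ i, (∑ j, if i ≠ j then p i * W * p j else 0)
      = (∑ j, p i * W * p j) - p i * W * p i := by
    intro i
    have : ∀ j, (if i ≠ j then p i * W * p j else 0)
        = p i * W * p j - (if i = j then p i * W * p j else 0) := by
      intro j
      by_cases hij : i = j
      · simp [hij]
      · simp [hij]
    rw [Finset.sum_congr rfl fun j _ => this j, Finset.sum_sub_distrib,
      Finset.sum_ite_eq Finset.univ i (fun j => p i * W * p j), if_pos (Finset.mem_univ i)]
  rw [Finset.sum_congr rfl fun i _ => this i, Finset.sum_sub_distrib, ← hW]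
end

section
/- Let R be a (possibly noncommutative) unital ring that is an algebra over a field K, ι a finite index type, q : ι → R pairwise orthogonal idempotents summing to one, and λ : ι → K injective. Let H be a formal power series in PowerSeries R whose constant coefficient equals ∑ i, (λ i) • (q i). Let k ≥ 1 and suppose P : ι → PowerSeries R is a family of pairwise orthogonal idempotents summing to one, with constant coefficient of P i equal to q i for every i, and such that H * P i - P i * H lies in the ideal generated by X^k for every i. Then there exists a unit u of PowerSeries R with u - 1 in the ideal generated by X^k such that, for every i, H * (u * P i * u⁻¹) - (u * P i * u⁻¹) * H lies in the ideal generated by X^(k+1). -/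
section Helpers
open PowerSeries

variable {R : Type*} [Ring R]

lemma mem_span_Xpow_iff {k : ℕ} {f : PowerSeries R} :
    f ∈ Ideal.span {(X : PowerSeries R) ^ k} ↔ ∀ n < k, coeff n f = 0 := by
  rw [Ideal.span, Submodule.mem_span_singleton]
  constructor
  · rintro ⟨g, rfl⟩
    have : (X : PowerSeries R) ^ k ∣ g • X ^ k := ⟨g, ((commute_X g).pow_right k).eq⟩
    exact fun n hn => X_pow_dvd_iff.mp this n hn
  · intro h
    obtain ⟨g, hg⟩ := X_pow_dvd_iff.mpr h
    exact ⟨g, by rw [hg]; exact ((commute_X g).pow_right k).eq⟩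

lemma span_Xpow_mul_right {k : ℕ} {f : PowerSeries R}
    (hf : f ∈ Ideal.span {(X : PowerSeries R) ^ k}) (g : PowerSeries R) :
    f * g ∈ Ideal.span {(X : PowerSeries R) ^ k} := by
  rw [mem_span_Xpow_iff] at hf ⊢
  intro n hn
  rw [coeff_mul]
  apply Finset.sum_eq_zero
  rintro ⟨p, q⟩ hpq
  rw [Finset.HasAntidiagonal.mem_antidiagonal] at hpq
  rw [hf p (lt_of_le_of_lt (by omega) hn), zero_mul]

lemma span_Xpow_mul_mem {a b : ℕ} {f g : PowerSeries R}
    (hf : f ∈ Ideal.span {(X : PowerSeries R) ^ a})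
    (hg : g ∈ Ideal.span {(X : PowerSeries R) ^ b}) :
    f * g ∈ Ideal.span {(X : PowerSeries R) ^ (a + b)} := by
  rw [mem_span_Xpow_iff] at hf hg ⊢
  intro n hn
  rw [coeff_mul]
  apply Finset.sum_eq_zero
  rintro ⟨p, q⟩ hpq
  rw [Finset.HasAntidiagonal.mem_antidiagonal] at hpq
  rcases lt_or_ge p a with h | h
  · rw [hf p h, zero_mul]
  · rw [hg q (by omega), mul_zero]

lemma coeff_mul_of_lowvanish {k : ℕ} {f : PowerSeries R}
    (hf : ∀ n < k, coeff n f = 0) (g : PowerSeries R) :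
    coeff k (f * g) = coeff k f * constantCoeff g := by
  rw [coeff_mul, Finset.sum_eq_single (k, 0)]
  · simp
  · rintro ⟨p, q⟩ hpq hne
    rw [Finset.HasAntidiagonal.mem_antidiagonal] at hpq
    simp only at hpq
    have hplt : p < k := by
      by_contra hc
      have hp : p = k := by omega
      have hq : q = 0 := by omega
      exact hne (by rw [hp, hq])
    simp only [hf p hplt, zero_mul]
  · intro h
    exact absurd (Finset.HasAntidiagonal.mem_antidiagonal.mpr (by simp)) h

lemma coeff_mul_of_lowvanish' {k : ℕ} {f : PowerSeries R}
    (hf : ∀ n < k, coeff n f = 0) (g : PowerSeries R) :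
    coeff k (g * f) = constantCoeff g * coeff k f := by
  rw [coeff_mul, Finset.sum_eq_single (0, k)]
  · simp
  · rintro ⟨p, q⟩ hpq hne
    rw [Finset.HasAntidiagonal.mem_antidiagonal] at hpq
    simp only at hpq
    have hqlt : q < k := by
      by_contra hc
      have hq : q = k := by omega
      have hp : p = 0 := by omega
      exact hne (by rw [hp, hq])
    simp only [hf q hqlt, mul_zero]
  · intro h
    exact absurd (Finset.HasAntidiagonal.mem_antidiagonal.mpr (by simp)) h

lemma pow_mem_span_Xpow {g : PowerSeries R} (hg : constantCoeff g = 0) (m : ℕ) :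
    g ^ m ∈ Ideal.span {(X : PowerSeries R) ^ m} := by
  induction m with
  | zero => simp [mem_span_Xpow_iff]
  | succ n ih =>
      rw [pow_succ]
      have h1 : g ∈ Ideal.span {(X : PowerSeries R) ^ 1} := by
        rw [mem_span_Xpow_iff]
        intro n hn
        interval_cases n
        simpa using hg
      exact span_Xpow_mul_mem (a := n) (b := 1) ih h1

lemma coeff_pow_vanish {g : PowerSeries R} (hg : constantCoeff g = 0)
    {m q : ℕ} (h : q < m) : coeff q (g ^ m) = 0 :=
  mem_span_Xpow_iff.mp (pow_mem_span_Xpow hg m) q h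

lemma exists_inv_one_add {t : PowerSeries R} (ht : constantCoeff t = 0) :
    ∃ v : PowerSeries R, (1 + t) * v = 1 ∧ v * (1 + t) = 1 := by
  set g : PowerSeries R := -t with hgdef
  have hg : constantCoeff g = 0 := by simp [hgdef, ht]
  have h1t : (1 : PowerSeries R) + t = 1 - g := by simp [hgdef]
  set S : ℕ → PowerSeries R := fun n => ∑ m ∈ Finset.range (n + 1), g ^ m with hS
  set v : PowerSeries R := PowerSeries.mk fun n => coeff n (S n) with hv
  have hvS : ∀ q n, q ≤ n → coeff q v = coeff q (S n) := by
    intro q n hqn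
    have key : ∀ n', q ≤ n' → coeff q (S n') = coeff q (S q) := by
      intro n' hqn'
      simp only [hS, map_sum]
      refine (Finset.sum_subset (Finset.range_subset_range.mpr (by omega)) ?_).symm
      intro m hm hm'
      simp only [Finset.mem_range] at hm hm'
      exact coeff_pow_vanish hg (by omega)
    rw [hv, coeff_mk, key n hqn, key q le_rfl]
  have main : ∀ (n : ℕ) (f : PowerSeries R), coeff n (f * v) = coeff n (f * S n) := by
    intro n f
    rw [coeff_mul, coeff_mul]
    refine Finset.sum_congr rfl ?_
    rintro ⟨p, q⟩ hpq
    rw [Finset.HasAntidiagonal.mem_antidiagonal] at hpq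
    rw [hvS q n (by omega)]
  have main' : ∀ (n : ℕ) (f : PowerSeries R), coeff n (v * f) = coeff n (S n * f) := by
    intro n f
    rw [coeff_mul, coeff_mul]
    refine Finset.sum_congr rfl ?_
    rintro ⟨p, q⟩ hpq
    rw [Finset.HasAntidiagonal.mem_antidiagonal] at hpq
    rw [hvS p n (by omega)]
  refine ⟨v, ?_, ?_⟩
  · ext n
    rw [h1t, main n (1 - g)]
    rw [hS]
    simp only [mul_neg_geom_sum g (n + 1)]
    simp [coeff_pow_vanish hg (Nat.lt_succ_self n)]
  · ext n
    rw [h1t, main' n (1 - g)]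
    rw [hS]
    simp only [geom_sum_mul_neg g (n + 1)]
    simp [coeff_pow_vanish hg (Nat.lt_succ_self n)]

lemma key_R {K R ι : Type*} [Field K] [Ring R] [Algebra K R] [Fintype ι]
    (q : ι → R) (hq0 : ∀ i j, i ≠ j → q i * q j = 0) (hq1 : ∀ i, q i * q i = q i)
    (hq2 : ∑ i, q i = 1)
    (lam : ι → K) (hinj : Function.Injective lam)
    (c : ι → R)
    (hrel1 : ∀ i j, i ≠ j → c i * q j + q i * c j = 0)
    (hrel2 : ∀ i, c i = c i * q i + q i * c i) :
    ∃ a : R, ∀ i, (∑ m, lam m • q m) * (a * q i - q i * a)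
        - (a * q i - q i * a) * (∑ m, lam m • q m) = - c i := by
  classical
  set H₀ : R := ∑ m, lam m • q m with hH₀
  have hH0l : ∀ j, H₀ * q j = lam j • q j := by
    intro j
    rw [hH₀, Finset.sum_mul]
    rw [Finset.sum_eq_single j]
    · rw [smul_mul_assoc, hq1]
    · intro m _ hm
      rw [smul_mul_assoc, hq0 m j hm, smul_zero]
    · intro h; exact absurd (Finset.mem_univ j) h
  have hH0r : ∀ j, q j * H₀ = lam j • q j := by
    intro j
    rw [hH₀, Finset.mul_sum]
    rw [Finset.sum_eq_single j]
    · rw [mul_smul_comm, hq1]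
    · intro m _ hm
      rw [mul_smul_comm, hq0 j m (fun h => hm h.symm), smul_zero]
    · intro h; exact absurd (Finset.mem_univ j) h
  have hblock : ∀ (j l : ι) (y : R),
      H₀ * (q j * y * q l) - (q j * y * q l) * H₀ = (lam j - lam l) • (q j * y * q l) := by
    intro j l y
    have h1 : H₀ * (q j * y * q l) = lam j • (q j * y * q l) := by
      rw [mul_assoc, ← mul_assoc H₀, hH0l, smul_mul_assoc, ← mul_assoc]
    have h2 : (q j * y * q l) * H₀ = lam l • (q j * y * q l) := by
      rw [mul_assoc, hH0r, mul_smul_comm]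
    rw [h1, h2, sub_smul]
  have hne : ∀ {j l : ι}, j ≠ l → lam j - lam l ≠ 0 := fun h =>
    sub_ne_zero.mpr fun he => h (hinj he)
  set F : ι → ι → R := fun j l =>
    if j = l then 0 else (lam j - lam l)⁻¹ • (q j * c j * q l) with hF
  set a : R := ∑ j, ∑ l, F j l with ha
  have hdiag : ∀ i, q i * c i * q i = 0 := by
    intro i
    have h0 : q i * (c i * q i + q i * c i) * q i = q i * c i * q i := by rw [← hrel2 i]
    have h1 : q i * (c i * q i + q i * c i) * q i
        = q i * c i * q i + q i * c i * q i := by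
      have e1 : q i * (c i * q i + q i * c i) * q i
          = q i * c i * (q i * q i) + q i * q i * (c i * q i) := by noncomm_ring
      rw [e1, hq1]; noncomm_ring
    exact add_eq_right.mp (h1.symm.trans h0)
  refine ⟨a, fun i => ?_⟩
  have hFq : ∀ j l, F j l * q i = if l = i then F j i else 0 := by
    intro j l
    by_cases hl : l = i
    · subst hl
      simp only [if_pos rfl]
      by_cases hj : j = l
      · simp [hF, hj]
      · simp only [hF, if_neg hj, smul_mul_assoc, mul_assoc, hq1]
        simp
    · simp only [if_neg hl]
      by_cases hj : j = l
      · simp [hF, hj]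
      · simp only [hF, if_neg hj, smul_mul_assoc, mul_assoc, hq0 l i hl, mul_zero, smul_zero]
  have hqF : ∀ j l, q i * F j l = if j = i then F i l else 0 := by
    intro j l
    by_cases hj : j = i
    · subst hj
      simp only [if_pos rfl]
      by_cases hl : j = l
      · simp [hF, hl]
      · simp only [hF, if_neg hl, mul_smul_comm, ← mul_assoc, hq1]
        simp
    · simp only [if_neg hj]
      by_cases hl : j = l
      · simp [hF, hl]
      · simp only [hF, if_neg hl, mul_smul_comm, ← mul_assoc,
          hq0 i j (fun he => hj he.symm), zero_mul, smul_zero]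
  have haq : a * q i = ∑ j, F j i := by
    rw [ha, Finset.sum_mul]
    refine Finset.sum_congr rfl fun j _ => ?_
    rw [Finset.sum_mul]
    calc ∑ l, F j l * q i = ∑ l, (if l = i then F j i else 0) :=
          Finset.sum_congr rfl fun l _ => hFq j l
      _ = F j i := by simp
  have hqa : q i * a = ∑ l, F i l := by
    rw [ha, Finset.mul_sum]
    calc ∑ j, q i * ∑ l, F j l = ∑ j, ∑ l, (if j = i then F i l else 0) := by
          refine Finset.sum_congr rfl fun j _ => ?_
          rw [Finset.mul_sum]
          exact Finset.sum_congr rfl fun l _ => hqF j l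
      _ = ∑ l, F i l := by rw [Finset.sum_comm]; simp
  have T1 : H₀ * (a * q i) - (a * q i) * H₀ = q i * c i - c i := by
    rw [haq, Finset.mul_sum, Finset.sum_mul, ← Finset.sum_sub_distrib]
    have hterm : ∀ j, H₀ * F j i - F j i * H₀ = if j = i then 0 else -(q j * c i) := by
      intro j
      by_cases h : j = i
      · simp [hF, h]
      · rw [hF]
        simp only [if_neg h]
        rw [mul_smul_comm, smul_mul_assoc, ← smul_sub, hblock j i (c j),
          smul_smul, inv_mul_cancel₀ (hne h), one_smul]
        have hcq : c j * q i = -(q j * c i) := by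
          have h' := hrel1 j i h
          linear_combination (norm := noncomm_ring) h'
        rw [mul_assoc, hcq, mul_neg, ← mul_assoc, hq1]
    rw [Finset.sum_congr rfl fun j _ => hterm j]
    have hterm2 : ∀ j, (if j = i then (0:R) else -(q j * c i))
        = -(q j * c i) + (if j = i then q j * c i else 0) := by
      intro j; by_cases h : j = i <;> simp [h]
    rw [Finset.sum_congr rfl fun j _ => hterm2 j, Finset.sum_add_distrib,
      Finset.sum_ite_eq' Finset.univ i fun j => q j * c i]
    have e : (∑ x : ι, -(q x * c i)) = -(c i) := by
      rw [Finset.sum_neg_distrib, ← Finset.sum_mul, hq2, one_mul]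
    rw [e]
    simp only [Finset.mem_univ, if_pos]
    noncomm_ring
  have T2 : H₀ * (q i * a) - (q i * a) * H₀ = q i * c i := by
    rw [hqa, Finset.mul_sum, Finset.sum_mul, ← Finset.sum_sub_distrib]
    have hterm : ∀ l, H₀ * F i l - F i l * H₀ = if l = i then 0 else q i * c i * q l := by
      intro l
      by_cases h : l = i
      · simp [hF, h]
      · rw [hF]
        simp only [if_neg (fun he : i = l => h he.symm)]
        rw [mul_smul_comm, smul_mul_assoc, ← smul_sub, hblock i l (c i),
          smul_smul, inv_mul_cancel₀ (hne (fun he : i = l => h he.symm)), one_smul]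
        rw [if_neg h]
    rw [Finset.sum_congr rfl fun l _ => hterm l]
    have hterm2 : ∀ l, (if l = i then (0:R) else q i * c i * q l)
        = q i * c i * q l - (if l = i then q i * c i * q l else 0) := by
      intro l; by_cases h : l = i <;> simp [h]
    rw [Finset.sum_congr rfl fun l _ => hterm2 l, Finset.sum_sub_distrib,
      ← Finset.mul_sum, hq2, Finset.sum_ite_eq' Finset.univ i fun l => q i * c i * q l]
    simp [hdiag i]
  have expand : H₀ * (a * q i - q i * a) - (a * q i - q i * a) * H₀
      = (H₀ * (a * q i) - (a * q i) * H₀) - (H₀ * (q i * a) - (q i * a) * H₀) := by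
    noncomm_ring
  rw [expand, T1, T2]
  noncomm_ring


end Helpers



open PowerSeries

/-- Inductive step of the quantum diagonalization theorem: if the family of projections
`P` commutes with `H` up to order `X^k`, then conjugating by a unit congruent to `1`
modulo `X^k` produces projections commuting with `H` up to order `X^(k+1)`. -/
theorem quantum_diagonalization_inductive_step
    {K R ι : Type*} [Field K] [Ring R] [Algebra K R] [Fintype ι]
    (q : ι → R)
    (hq0 : ∀ i j, i ≠ j → q i * q j = 0)
    (hq1 : ∀ i, q i * q i = q i)
    (hq2 : ∑ i, q i = 1)
    (lam : ι → K) (hinj : Function.Injective lam)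
    (H : PowerSeries R)
    (hH : constantCoeff H = ∑ i, lam i • q i)
    (k : ℕ) (hk : 1 ≤ k)
    (P : ι → PowerSeries R)
    (hP0 : ∀ i j, i ≠ j → P i * P j = 0)
    (hP1 : ∀ i, P i * P i = P i)
    (hP2 : ∑ i, P i = 1)
    (hPc : ∀ i, constantCoeff (P i) = q i)
    (hcomm : ∀ i, H * P i - P i * H ∈ Ideal.span {(X : PowerSeries R) ^ k}) :
    ∃ u : (PowerSeries R)ˣ,
      (u : PowerSeries R) - 1 ∈ Ideal.span {(X : PowerSeries R) ^ k} ∧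
      ∀ i, H * ((u : PowerSeries R) * P i * (↑u⁻¹ : PowerSeries R)) -
            ((u : PowerSeries R) * P i * (↑u⁻¹ : PowerSeries R)) * H ∈
          Ideal.span {(X : PowerSeries R) ^ (k + 1)} := by
  classical
  set c : ι → R := fun i => coeff k (H * P i - P i * H) with hc
  have Glow : ∀ i, ∀ n < k, coeff n (H * P i - P i * H) = 0 :=
    fun i => mem_span_Xpow_iff.mp (hcomm i)
  have rel1 : ∀ i j, i ≠ j → c i * q j + q i * c j = 0 := by
    intro i j hij
    have hzero : (H * P i - P i * H) * P j + P i * (H * P j - P j * H)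
        = H * (P i * P j) - (P i * P j) * H := by noncomm_ring
    rw [hP0 i j hij, mul_zero, zero_mul, sub_zero] at hzero
    have := congrArg (coeff k) hzero
    rw [map_add, coeff_mul_of_lowvanish (Glow i) (P j),
      coeff_mul_of_lowvanish' (Glow j) (P i), hPc, hPc] at this
    simpa [hc] using this
  have rel2 : ∀ i, c i = c i * q i + q i * c i := by
    intro i
    have hzero : (H * P i - P i * H) * P i + P i * (H * P i - P i * H)
        = H * (P i * P i) - (P i * P i) * H := by noncomm_ring
    rw [hP1 i] at hzero
    have := congrArg (coeff k) hzero
    rw [map_add, coeff_mul_of_lowvanish (Glow i) (P i),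
      coeff_mul_of_lowvanish' (Glow i) (P i), hPc] at this
    rw [hc]
    exact this.symm
  obtain ⟨a, hkey⟩ := key_R q hq0 hq1 hq2 lam hinj c rel1 rel2
  set t : PowerSeries R := (X : PowerSeries R) ^ k * C a with ht
  have htk : t ∈ Ideal.span {(X : PowerSeries R) ^ k} := by
    rw [Ideal.span, Submodule.mem_span_singleton]
    exact ⟨C a, ((commute_X (C a)).pow_right k).eq⟩
  have ht0 : constantCoeff t = 0 := by
    have := mem_span_Xpow_iff.mp htk 0 (by omega)
    simpa using this
  obtain ⟨v, hv1, hv2⟩ := exists_inv_one_add ht0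
  refine ⟨⟨1 + t, v, hv1, hv2⟩, ?_, ?_⟩
  · simpa using htk
  · intro i
    show H * ((1 + t) * P i * v) - ((1 + t) * P i * v) * H ∈ _
    set M := Ideal.span {(X : PowerSeries R) ^ (k + 1)} with hM
    have h2kM : ∀ f : PowerSeries R, f ∈ Ideal.span {(X : PowerSeries R) ^ (k + k)} → f ∈ M :=
      fun f hf => mem_span_Xpow_iff.mpr fun n hn => mem_span_Xpow_iff.mp hf n (by omega)
    have hvsub : v - 1 + t ∈ M := by
      have h' : v + v * t = 1 := by rw [← hv2, mul_add, mul_one]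
      have he : v - 1 + t = (1 - v) * t := by
        rw [sub_mul, one_mul, ← h']; abel
      have h1v : (1 : PowerSeries R) - v ∈ Ideal.span {(X : PowerSeries R) ^ k} := by
        have hvt : (1 : PowerSeries R) - v = v * t := by
          rw [← h']; abel
        rw [hvt]
        exact Ideal.mul_mem_left _ v htk
      rw [he]
      exact h2kM _ (span_Xpow_mul_mem h1v htk)
    set B : PowerSeries R := P i + (t * P i - P i * t) with hB
    have hQB : (1 + t) * P i * v - B ∈ M := by
      have hident : (1 + t) * P i * v - B
          = (1 + t) * (P i * (v - 1 + t)) - t * (P i * t) := by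
        rw [hB]; noncomm_ring
      rw [hident]
      refine Ideal.sub_mem _ (Ideal.mul_mem_left _ _ (Ideal.mul_mem_left _ _ hvsub)) ?_
      exact h2kM _ (span_Xpow_mul_mem htk (Ideal.mul_mem_left _ (P i) htk))
    have hHB : H * B - B * H ∈ M := by
      have hsplit : H * B - B * H
          = (H * P i - P i * H) + (H * (t * P i - P i * t) - (t * P i - P i * t) * H) := by
        rw [hB]; noncomm_ring
      rw [hsplit]
      have hg : t * P i - P i * t ∈ Ideal.span {(X : PowerSeries R) ^ k} :=
        Ideal.sub_mem _ (span_Xpow_mul_right htk (P i)) (Ideal.mul_mem_left _ (P i) htk)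
      have hcommg : H * (t * P i - P i * t) - (t * P i - P i * t) * H
          ∈ Ideal.span {(X : PowerSeries R) ^ k} :=
        Ideal.sub_mem _ (Ideal.mul_mem_left _ H hg) (span_Xpow_mul_right hg H)
      rw [hM]
      rw [mem_span_Xpow_iff]
      intro n hn
      rcases lt_or_ge n k with hnk | hnk
      · rw [map_add, Glow i n hnk, mem_span_Xpow_iff.mp hcommg n hnk, add_zero]
      · have hnk' : n = k := by omega
        rw [hnk', map_add]
        -- second summand: coeff k = H₀ h₀ - h₀ H₀ = - c i
        set h : PowerSeries R := C a * P i - P i * C a with hh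
        have hfact : t * P i - P i * t = (X : PowerSeries R) ^ k * h := by
          rw [hh, ht, mul_sub]
          rw [mul_assoc]
          congr 1
          rw [← mul_assoc, ((commute_X (P i)).pow_right k).eq, mul_assoc]
        have hfact2 : H * (t * P i - P i * t) - (t * P i - P i * t) * H
            = (X : PowerSeries R) ^ k * (H * h - h * H) := by
          rw [hfact]
          have cH : H * ((X : PowerSeries R) ^ k * h) = (X : PowerSeries R) ^ k * (H * h) := by
            rw [← mul_assoc, ((commute_X H).pow_right k).eq, mul_assoc]
          have c2 : ((X : PowerSeries R) ^ k * h) * H = (X : PowerSeries R) ^ k * (h * H) := by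
            rw [mul_assoc]
          rw [cH, c2, ← mul_sub]
        rw [hfact2]
        have hcoeffX : ∀ f : PowerSeries R,
            coeff k ((X : PowerSeries R) ^ k * f) = constantCoeff f := by
          intro f
          rw [← ((commute_X f).pow_right k).eq]
          have := coeff_mul_X_pow f k 0
          rw [zero_add] at this
          rw [this, coeff_zero_eq_constantCoeff]
        rw [hcoeffX]
        have hcc : constantCoeff (H * h - h * H)
            = (∑ m, lam m • q m) * (a * q i - q i * a)
              - (a * q i - q i * a) * (∑ m, lam m • q m) := by
          rw [map_sub, map_mul, map_mul, hh, map_sub, map_mul, map_mul,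
            constantCoeff_C, hPc, hH]
        rw [hcc, hkey i]
        simp [hc]
    have hfinal : H * ((1 + t) * P i * v) - ((1 + t) * P i * v) * H
        = (H * B - B * H)
          + (H * ((1 + t) * P i * v - B) - ((1 + t) * P i * v - B) * H) := by
      noncomm_ring
    rw [hfinal]
    exact Ideal.add_mem _ hHB
      (Ideal.sub_mem _ (Ideal.mul_mem_left _ H hQB) (span_Xpow_mul_right hQB H))
end

section
/- Let R be a (possibly noncommutative) unital ring that is an algebra over a field K, ι a finite index type, λ : ι → K a function, and P : ι → PowerSeries R a family of pairwise orthogonal idempotents summing to one, each commuting with a fixed H ∈ PowerSeries R, and such that the constant coefficient of H equals ∑ i, (λ i) • (constant coefficient of P i). If a ∈ PowerSeries R commutes with P i for every i, then there exists b ∈ PowerSeries R with H * a - a * H = X * b, and b commutes with P i for every i. -/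
open PowerSeries

theorem X_mul_inj {R : Type*} [Ring R] {u v : PowerSeries R}
    (h : (X : PowerSeries R) * u = X * v) : u = v := by
  ext n
  have := congrArg (coeff (n + 1)) h
  simpa [coeff_succ_X_mul] using this

/-- Compatibility theorem (algebraic core): if `a` commutes with the quantum projections
`P i`, which commute with `H` and project out the (distinct-eigenvalue) principal symbol
of `H`, then the commutator `[H, a]` is divisible by the formal parameter `X`, and the
quotient again commutes with all the `P i`. -/
theorem heisenberg_evolution_compatible
    {K R ι : Type*} [Field K] [Ring R] [Algebra K R] [Fintype ι]
    (lam : ι → K)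
    (P : ι → PowerSeries R)
    (hP0 : ∀ i j, i ≠ j → P i * P j = 0)
    (hP1 : ∀ i, P i * P i = P i)
    (hP2 : ∑ i, P i = 1)
    (H : PowerSeries R)
    (hHP : ∀ i, H * P i = P i * H)
    (hH : constantCoeff H = ∑ i, lam i • constantCoeff (P i))
    (a : PowerSeries R)
    (ha : ∀ i, a * P i = P i * a) :
    ∃ b : PowerSeries R,
      H * a - a * H = X * b ∧ ∀ i, b * P i = P i * b := by
  have hconst : constantCoeff (H * a - a * H) = 0 := by
    have hcomm : constantCoeff H * constantCoeff a
        = constantCoeff a * constantCoeff H := by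
      rw [hH, Finset.sum_mul, Finset.mul_sum]
      refine Finset.sum_congr rfl fun i _ => ?_
      rw [smul_mul_assoc, mul_smul_comm]
      congr 1
      have := congrArg (constantCoeff) (ha i)
      simpa [map_mul] using this.symm
    simp [map_mul, hcomm]
  obtain ⟨b, hb⟩ := X_dvd_iff.mpr hconst
  refine ⟨b, hb, fun i => ?_⟩
  apply _root_.X_mul_inj
  have hXc : (X : PowerSeries R) * (b * P i) = (H * a - a * H) * P i := by
    rw [hb, mul_assoc]
  have hXc' : (X : PowerSeries R) * (P i * b) = P i * (H * a - a * H) := by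
    rw [hb, ← mul_assoc, ← (commute_X (P i)).eq, mul_assoc]
  rw [hXc, hXc']
  have h1 : H * a * P i = P i * (H * a) := by
    rw [mul_assoc, ha, ← mul_assoc, hHP, mul_assoc]
  have h2 : a * H * P i = P i * (a * H) := by
    rw [mul_assoc, hHP, ← mul_assoc, ha, mul_assoc]
  rw [sub_mul, mul_sub, h1, h2]
end

section
/- Hermitian formal diagonalization: Let R be a unital ring that is a complex star algebra (Algebra ℂ R, StarRing R, StarModule ℂ R), ι a finite index type, q : ι → R pairwise orthogonal self-adjoint idempotents summing to one (star (q i) = q i), and λ : ι → ℝ injective. Let H ∈ PowerSeries R be such that every coefficient of H is self-adjoint and the constant coefficient of H equals ∑ i, ((λ i : ℂ)) • (q i). Then there exists a family P : ι → PowerSeries R such that: P i * P j = 0 for i ≠ j, P i * P i = P i, ∑ i, P i = 1, the constant coefficient of P i is q i, every coefficient of every P i is self-adjoint in R, and H * P i = P i * H for every i. -/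
open PowerSeries

private theorem PSaux.small_mul {R : Type*} [Ring R] {u w : PowerSeries R} {k l : ℕ}
    (hu : ∀ m < k, coeff m u = 0) (hw : ∀ m < l, coeff m w = 0) :
    ∀ m < k + l, coeff m (u * w) = 0 := by
  intro m hm
  rw [PowerSeries.coeff_mul]
  refine Finset.sum_eq_zero fun x hx => ?_
  rw [Finset.HasAntidiagonal.mem_antidiagonal] at hx
  rcases lt_or_ge x.1 k with h | h
  · rw [hu x.1 h, zero_mul]
  · rw [hw x.2 (by omega), mul_zero]

private theorem PSaux.idem_zero {R : Type*} [Ring R] {u : PowerSeries R}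
    (h : u * u = u) (h0 : constantCoeff u = 0) : u = 0 := by
  ext n
  rw [map_zero]
  induction n using Nat.strong_induction_on with
  | _ n ih =>
    rw [← h, PowerSeries.coeff_mul]
    refine Finset.sum_eq_zero fun x hx => ?_
    rw [Finset.HasAntidiagonal.mem_antidiagonal] at hx
    rcases Nat.eq_zero_or_pos x.1 with h1 | h1
    · rw [h1, coeff_zero_eq_constantCoeff_apply, h0, zero_mul]
    · rw [ih x.2 (by omega), mul_zero]

private theorem PSaux.sa_mul {R : Type*} [Ring R] [StarRing R] {u w : PowerSeries R}
    (hu : ∀ n, star (coeff n u) = coeff n u) (hw : ∀ n, star (coeff n w) = coeff n w)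
    (n : ℕ) : star (coeff n (u * w)) = coeff n (w * u) := by
  rw [PowerSeries.coeff_mul, PowerSeries.coeff_mul, star_sum]
  conv_rhs => rw [← Finset.HasAntidiagonal.map_swap_antidiagonal, Finset.sum_map]
  refine Finset.sum_congr rfl fun x hx => ?_
  simp only [Equiv.coe_toEmbedding, Equiv.coe_prodComm, Prod.fst_swap, Prod.snd_swap,
    Function.Embedding.coeFn_mk]
  rw [star_mul, hu, hw]

/-- Hermitian formal diagonalization: for a Hermitian formal Hamiltonian whose principal
symbol `∑ i, (lam i : ℂ) • q i` has Hermitian spectral projections `q i` and real distinct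
eigenvalues `lam i`, there exist quantum projections `P i` — pairwise orthogonal
idempotents summing to one, with constant term `q i` and all coefficients self-adjoint —
commuting with `H`. -/
theorem hermitian_formal_diagonalization
    {R ι : Type*} [Ring R] [Algebra ℂ R] [StarRing R] [StarModule ℂ R] [Fintype ι]
    (q : ι → R)
    (hq0 : ∀ i j, i ≠ j → q i * q j = 0)
    (hq1 : ∀ i, q i * q i = q i)
    (hq2 : ∑ i, q i = 1)
    (hqs : ∀ i, star (q i) = q i)
    (lam : ι → ℝ) (hinj : Function.Injective lam)
    (H : PowerSeries R)
    (hHs : ∀ n : ℕ, star (coeff n H) = coeff n H)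
    (hH0 : constantCoeff H = ∑ i, ((lam i : ℂ)) • q i) :
    ∃ P : ι → PowerSeries R,
      (∀ i j, i ≠ j → P i * P j = 0) ∧
      (∀ i, P i * P i = P i) ∧
      (∑ i, P i = 1) ∧
      (∀ i, constantCoeff (P i) = q i) ∧
      (∀ i, ∀ n : ℕ, star (coeff n (P i)) = coeff n (P i)) ∧
      (∀ i, H * P i = P i * H) := by
  classical
  -- the scalar embedding ℝ → PowerSeries R
  set ρ : ℝ →+* PowerSeries R := (algebraMap ℂ (PowerSeries R)).comp (algebraMap ℝ ℂ) with hρ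
  have hρcomm : ∀ a : ℝ, Commute (ρ a) H := by
    intro a
    have h1 : ρ a = algebraMap ℂ (PowerSeries R) ((a : ℝ) : ℂ) := rfl
    rw [Commute, SemiconjBy, h1]
    exact Algebra.commutes (R := ℂ) (A := PowerSeries R) ((a : ℝ) : ℂ) H
  -- the evaluation at H
  set Φ : Polynomial ℝ →+* PowerSeries R := Polynomial.eval₂RingHom' ρ H hρcomm with hΦ
  have hΦapply : ∀ p : Polynomial ℝ, Φ p = Polynomial.eval₂ ρ H p := fun _ => rfl
  -- every image of Φ commutes with H
  have hΦcomm : ∀ p : Polynomial ℝ, H * Φ p = Φ p * H := by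
    intro p
    induction p using Polynomial.induction_on with
    | C a => simpa [hΦapply] using (hρcomm a).symm.eq
    | add p r hp hr => simp [map_add, mul_add, add_mul, hp, hr]
    | monomial n a hp =>
      have hX : Φ (Polynomial.X) = H := by simp [hΦapply]
      have h1 : Polynomial.C a * Polynomial.X ^ (n + 1) =
          (Polynomial.C a * Polynomial.X ^ n) * Polynomial.X := by ring
      rw [h1, map_mul, hX, ← mul_assoc, hp, mul_assoc]
  -- images of Φ commute with each other
  have hΦcomm2 : ∀ p r : Polynomial ℝ, Φ p * Φ r = Φ r * Φ p := by
    intro p r; rw [← map_mul, mul_comm, map_mul]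
  -- the constant coefficient of Φ p
  have hεalg : ∀ z : ℂ, constantCoeff (algebraMap ℂ (PowerSeries R) z) = algebraMap ℂ R z := by
    intro z; rw [PowerSeries.algebraMap_apply, PowerSeries.constantCoeff_C]
  set H0 : R := constantCoeff H with hH0def
  set ρ₀ : ℝ →+* R := (algebraMap ℂ R).comp (algebraMap ℝ ℂ) with hρ₀
  have hρ₀comm : ∀ a : ℝ, Commute (ρ₀ a) H0 := by
    intro a
    have h1 : ρ₀ a = algebraMap ℂ R ((a : ℝ) : ℂ) := rfl
    rw [Commute, SemiconjBy, h1]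
    exact Algebra.commutes (R := ℂ) (A := R) ((a : ℝ) : ℂ) H0
  have hεΦ : ∀ p : Polynomial ℝ,
      constantCoeff (Φ p) = Polynomial.eval₂ ρ₀ H0 p := by
    intro p
    induction p using Polynomial.induction_on with
    | C a => simp [hΦapply, hεalg, hρ, hρ₀]
    | add p r hp hr => simp [map_add, hp, hr, Polynomial.eval₂_add]
    | monomial n a hp =>
      have h1 : Polynomial.C a * Polynomial.X ^ (n + 1) =
          (Polynomial.C a * Polynomial.X ^ n) * Polynomial.X := by ring
      rw [h1, map_mul, map_mul, Polynomial.eval₂_mul_X, hp]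
      simp [hΦapply, ← hH0def]
  -- powers of H0
  have hH0pow : ∀ n : ℕ, H0 ^ n = ∑ j, ((lam j : ℂ) ^ n) • q j := by
    intro n
    induction n with
    | zero => simpa using hq2.symm
    | succ n ih =>
      rw [pow_succ, ih, hH0, Finset.sum_mul]
      refine Finset.sum_congr rfl fun j _ => ?_
      rw [Finset.mul_sum]
      rw [Finset.sum_eq_single j]
      · rw [smul_mul_smul_comm, hq1, ← pow_succ]
      · intro k _ hk
        rw [smul_mul_smul_comm, hq0 j k (by exact fun h => hk h.symm), smul_zero]
      · intro h; exact absurd (Finset.mem_univ j) h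
  -- evaluation of real polynomials at H0
  have heval : ∀ p : Polynomial ℝ,
      Polynomial.eval₂ ρ₀ H0 p = ∑ j, ((p.eval (lam j) : ℝ) : ℂ) • q j := by
    intro p
    induction p using Polynomial.induction_on' with
    | add p r hp hr => simp [Polynomial.eval₂_add, hp, hr, add_smul, Finset.sum_add_distrib]
    | monomial n a =>
      rw [Polynomial.eval₂_monomial, hH0pow, Finset.mul_sum]
      refine Finset.sum_congr rfl fun j _ => ?_
      rw [hρ₀]
      simp only [RingHom.coe_comp, Function.comp_apply, Polynomial.eval_monomial]
      rw [← Algebra.smul_def]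
      rw [smul_smul]
      rw [show (algebraMap ℝ ℂ) a = (a : ℂ) from rfl]
      norm_cast
  -- the Lagrange basis polynomials
  set f : ι → Polynomial ℝ := fun i => Lagrange.basis Finset.univ lam i with hf
  have hfeval : ∀ i j, (f i).eval (lam j) = if i = j then 1 else 0 := by
    intro i j
    by_cases h : i = j
    · subst h
      simp [hf, Lagrange.eval_basis_self hinj.injOn (Finset.mem_univ i), if_pos rfl]
    · simp [hf, Lagrange.eval_basis_of_ne h (Finset.mem_univ j), if_neg h]
  -- the Newton iteration
  set N : Polynomial ℝ → Polynomial ℝ := fun p => 3 * (p * p) - 2 * (p * p * p) with hN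
  set g : ι → ℕ → Polynomial ℝ := fun i M => N^[M] (f i) with hg
  have hgsucc : ∀ i M, g i (M + 1) = N (g i M) := by
    intro i M; rw [hg]; simp [Function.iterate_succ_apply']
  set e : ι → ℕ → PowerSeries R := fun i M => Φ (g i M) with he
  have heapply : ∀ i M, e i M = Φ (g i M) := fun _ _ => rfl
  have hg0 : ∀ i, g i 0 = f i := fun _ => rfl
  -- constant coefficients of the approximants
  have hεe : ∀ i M, constantCoeff (e i M) = q i := by
    intro i M
    induction M with
    | zero =>
      rw [heapply, hg0, hεΦ, heval]
      rw [Finset.sum_eq_single i]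
      · rw [hfeval, if_pos rfl]; norm_num
      · intro j _ hj; rw [hfeval, if_neg (by exact fun h => hj h.symm)]; norm_num
      · intro h; exact absurd (Finset.mem_univ i) h
    | succ M ih =>
      rw [heapply, hgsucc, hN]
      simp only [map_sub, map_mul, map_ofNat]
      rw [← heapply, ih, hq1 i, hq1 i]
      noncomm_ring
  -- smallness of the idempotency defect
  have hD : ∀ i M, ∀ m < 2 ^ M, coeff m (e i M * e i M - e i M) = 0 := by
    intro i M
    induction M with
    | zero =>
      intro m hm
      interval_cases m
      rw [coeff_zero_eq_constantCoeff_apply, map_sub, map_mul, hεe, hq1, sub_self]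
    | succ M ih =>
      have key : e i (M + 1) * e i (M + 1) - e i (M + 1) =
          Φ (4 * (g i M * g i M - g i M) - 3) *
            ((e i M * e i M - e i M) * (e i M * e i M - e i M)) := by
        have hid : N (g i M) * N (g i M) - N (g i M) =
            (4 * (g i M * g i M - g i M) - 3) *
              ((g i M * g i M - g i M) * (g i M * g i M - g i M)) := by
          rw [hN]; ring
        rw [heapply i (M + 1), hgsucc, ← map_mul, ← map_sub, hid]
        simp only [map_mul, map_sub, ← heapply]
      intro m hm
      rw [key]
      have h2 : (2 : ℕ) ^ (M + 1) = 0 + (2 ^ M + 2 ^ M) := by rw [pow_succ]; omega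
      exact PSaux.small_mul (fun m hm => absurd hm (Nat.not_lt_zero m))
        (PSaux.small_mul ih ih) m (by omega)
  -- stabilization of coefficients
  have hstep : ∀ i M, ∀ m < 2 ^ M, coeff m (e i (M + 1)) = coeff m (e i M) := by
    intro i M m hm
    have key : e i (M + 1) - e i M =
        Φ (1 - 2 * g i M) * (e i M * e i M - e i M) := by
      have hid : N (g i M) - g i M =
          (1 - 2 * g i M) * (g i M * g i M - g i M) := by rw [hN]; ring
      rw [heapply i (M + 1), hgsucc, ← map_sub, hid]
      simp only [map_mul, map_sub, ← heapply]
    have hz : coeff m (e i (M + 1) - e i M) = 0 := by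
      rw [key]
      exact PSaux.small_mul (fun m hm => absurd hm (Nat.not_lt_zero m)) (hD i M) m
        (by omega)
    rw [map_sub] at hz
    exact sub_eq_zero.mp hz
  have hstab : ∀ i m M M', m < 2 ^ M → M ≤ M' → coeff m (e i M') = coeff m (e i M) := by
    intro i m M M' hm hMM'
    induction M' , hMM' using Nat.le_induction with
    | base => rfl
    | succ M' hMM' ih =>
      rw [hstep i M' m (lt_of_lt_of_le hm (Nat.pow_le_pow_right (by norm_num) hMM')), ih]
  -- the limit projections
  set P : ι → PowerSeries R := fun i => PowerSeries.mk fun n => coeff n (e i (n + 1)) with hPdef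
  have hn2 : ∀ n : ℕ, n < 2 ^ (n + 1) := fun n =>
    lt_of_lt_of_le (Nat.lt_two_pow_self (n := n)) (Nat.pow_le_pow_right (by norm_num) (Nat.le_succ n))
  have hPcoeff : ∀ i n, coeff n (P i) = coeff n (e i (n + 1)) :=
    fun i n => PowerSeries.coeff_mk n _
  have hP : ∀ i n M, n < 2 ^ M → coeff n (P i) = coeff n (e i M) := by
    intro i n M hnM
    rw [hPcoeff]
    rcases le_total M (n + 1) with h | h
    · exact (hstab i n M (n + 1) hnM h)
    · exact (hstab i n (n + 1) M (hn2 n) h).symm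
  -- transfer of coefficients for products
  have hPmul : ∀ i j n M, n < 2 ^ M →
      coeff n (P i * P j) = coeff n (e i M * e j M) := by
    intro i j n M hnM
    rw [PowerSeries.coeff_mul, PowerSeries.coeff_mul]
    refine Finset.sum_congr rfl fun x hx => ?_
    rw [Finset.HasAntidiagonal.mem_antidiagonal] at hx
    rw [hP i x.1 M (by omega), hP j x.2 M (by omega)]
  -- orthogonality smallness
  have hOrth : ∀ i j, i ≠ j → ∀ M, ∀ m < 2 ^ M, coeff m (e i M * e j M) = 0 := by
    intro i j hij M
    induction M with
    | zero =>
      intro m hm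
      interval_cases m
      rw [coeff_zero_eq_constantCoeff_apply, map_mul, hεe, hεe, hq0 i j hij]
    | succ M ih =>
      have key : e i (M + 1) * e j (M + 1) =
          ((e i M * e j M) * Φ ((3 - 2 * g i M) * (3 - 2 * g j M))) *
            (e i M * e j M) := by
        have hid : N (g i M) * N (g j M) =
            ((g i M * g j M) * ((3 - 2 * g i M) * (3 - 2 * g j M))) *
              (g i M * g j M) := by rw [hN]; ring
        rw [heapply i (M + 1), heapply j (M + 1), hgsucc, hgsucc, ← map_mul, hid]
        simp only [map_mul, ← heapply]
      intro m hm
      rw [key]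
      have h2 : (2 : ℕ) ^ (M + 1) = (2 ^ M + 0) + 2 ^ M := by rw [pow_succ]; omega
      exact PSaux.small_mul
        (PSaux.small_mul ih (fun m hm => absurd hm (Nat.not_lt_zero m))) ih m (by omega)
  -- now the conclusions
  refine ⟨P, ?_, ?_, ?_, ?_, ?_, ?_⟩
  -- pairwise orthogonality
  case refine_1 =>
    intro i j hij
    ext n
    rw [map_zero, hPmul i j n (n + 1) (hn2 n), hOrth i j hij (n + 1) n (hn2 n)]
  -- idempotency
  case refine_2 =>
    intro i
    ext n
    rw [hPmul i i n (n + 1) (hn2 n), hP i n (n + 1) (hn2 n)]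
    have hz := hD i (n + 1) n (hn2 n)
    rw [map_sub] at hz
    rw [sub_eq_zero.mp hz]
  -- sum to one
  case refine_3 =>
    have horth : ∀ i j, i ≠ j → P i * P j = 0 := by
      intro i j hij
      ext n
      rw [map_zero, hPmul i j n (n + 1) (hn2 n), hOrth i j hij (n + 1) n (hn2 n)]
    have hidem : ∀ i, P i * P i = P i := by
      intro i
      ext n
      rw [hPmul i i n (n + 1) (hn2 n), hP i n (n + 1) (hn2 n)]
      have hz := hD i (n + 1) n (hn2 n)
      rw [map_sub] at hz
      rw [sub_eq_zero.mp hz]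
    have hε : ∀ i, constantCoeff (P i) = q i := by
      intro i
      rw [← coeff_zero_eq_constantCoeff_apply, hP i 0 1 (by norm_num),
        coeff_zero_eq_constantCoeff_apply, hεe]
    set S : PowerSeries R := ∑ i, P i with hS
    have hSS : S * S = S := by
      rw [hS, Finset.sum_mul]
      refine Finset.sum_congr rfl fun i _ => ?_
      rw [Finset.mul_sum, Finset.sum_eq_single i]
      · exact hidem i
      · intro j _ hj; exact horth i j (by exact fun h => hj h.symm)
      · intro h; exact absurd (Finset.mem_univ i) h
    have h1S : (1 - S) * (1 - S) = 1 - S := by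
      rw [mul_sub, sub_mul, sub_mul, hSS]; noncomm_ring
    have hε1S : constantCoeff (1 - S) = 0 := by
      rw [map_sub, map_one, hS, map_sum]
      rw [Finset.sum_congr rfl fun i _ => hε i, hq2, sub_self]
    have := PSaux.idem_zero h1S hε1S
    rw [sub_eq_zero] at this
    exact this.symm
  -- constant coefficients
  case refine_4 =>
    intro i
    rw [← coeff_zero_eq_constantCoeff_apply, hP i 0 1 (by norm_num),
      coeff_zero_eq_constantCoeff_apply, hεe]
  -- self-adjoint coefficients
  case refine_5 =>
    have hSApow : ∀ k n : ℕ, star (coeff n (H ^ k)) = coeff n (H ^ k) := by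
      intro k
      induction k with
      | zero =>
        intro n
        rw [pow_zero, PowerSeries.coeff_one]
        split <;> simp
      | succ k ih =>
        intro n
        have h1 : H ^ (k + 1) = H ^ k * H := pow_succ H k
        have h2 : H ^ (k + 1) = H * H ^ k := pow_succ' H k
        rw [h1, PSaux.sa_mul ih hHs, ← h2, h1]
    have hSAΦ : ∀ p : Polynomial ℝ, ∀ n, star (coeff n (Φ p)) = coeff n (Φ p) := by
      intro p n
      rw [hΦapply, Polynomial.eval₂_eq_sum, Polynomial.sum, map_sum, star_sum]
      refine Finset.sum_congr rfl fun k _ => ?_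
      have hρs : ρ (p.coeff k) * H ^ k = ((p.coeff k : ℝ) : ℂ) • H ^ k := by
        rw [hρ]
        simp only [RingHom.coe_comp, Function.comp_apply]
        rw [← Algebra.smul_def, Complex.coe_algebraMap]
      rw [hρs, PowerSeries.coeff_smul, star_smul, hSApow]
      congr 1
      rw [Complex.star_def, Complex.conj_ofReal]
    intro i n
    rw [hP i n (n + 1) (hn2 n), heapply]
    exact hSAΦ _ n
  -- commutation with H
  case refine_6 =>
    intro i
    ext n
    have h1 : coeff n (H * P i) = coeff n (H * e i (n + 1)) := by
      rw [PowerSeries.coeff_mul, PowerSeries.coeff_mul]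
      refine Finset.sum_congr rfl fun x hx => ?_
      rw [Finset.HasAntidiagonal.mem_antidiagonal] at hx
      rw [hP i x.2 (n + 1) (by have := hn2 n; omega)]
    have h2 : coeff n (P i * H) = coeff n (e i (n + 1) * H) := by
      rw [PowerSeries.coeff_mul, PowerSeries.coeff_mul]
      refine Finset.sum_congr rfl fun x hx => ?_
      rw [Finset.HasAntidiagonal.mem_antidiagonal] at hx
      rw [hP i x.1 (n + 1) (by have := hn2 n; omega)]
    rw [h1, h2, heapply, hΦcomm]
end
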